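/- arXiv:2402.11741 — 4 statements merged into one kernel-verified Lean document; each statement's English description precedes it below -/
import Mathlib

section
/- In the set-cover reduction graph for BoundedMax Retrieval with max-retrieval constraint R = 1, any feasible solution can be transformed in polynomial time into another feasible solution with equal or smaller total storage cost in which no element version b_j is materialized (every b_j is retrieved via a stored delta from a set version a_i with o_j ∈ A_i). -/
/-!
Choose for every element `o_j` a set `A_{c j}` containing it and push every version along
`b_j ↦ a_{c j}` (set versions stay put). The materialized set shrinks to its image, and each
non-materialized version is given the image of its old parent (or, for a formerly materialized
`b_j`, the version `a_{c j}`) as new parent. An edge `(b_j, a_i)` becomes `(a_{c j}, a_i)`, which is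
an edge as long as the two endpoints differ, and they do because one is materialized and the other
is not. Fewer materializations mean a smaller cost since `N ≥ 1`.
-/

/-- Edges of the set-cover reduction graph: set versions `a_i` (left), element
versions `b_j` (right); symmetric unit-cost deltas between distinct set versions,
and between `a_i` and `b_j` whenever element `o_j ∈ A_i` (i.e. `mem i j`). -/
def covEdge {m n : ℕ} (mem : Fin m → Fin n → Prop) :
    Sum (Fin m) (Fin n) → Sum (Fin m) (Fin n) → Prop
  | Sum.inl i, Sum.inl i' => i ≠ i'
  | Sum.inl i, Sum.inr j => mem i j
  | Sum.inr j, Sum.inl i => mem i j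
  | Sum.inr _, Sum.inr _ => False

open Finset

section Contraction

variable {α : Type*}

/-- With unit edge costs and `R = 1`, a solution is feasible iff every non-materialized version
has a materialized parent across one stored delta. -/
def IsRetrievalPlan (E : α → α → Prop) (M : Finset α) (par : α → α) : Prop :=
  ∀ v ∉ M, par v ∈ M ∧ E (par v) v

theorem IsRetrievalPlan.image [DecidableEq α] {E : α → α → Prop} {M : Finset α} {par : α → α}
    (h : IsRetrievalPlan E M par) (f : α → α) (hself : ∀ v, f v ≠ v → E (f v) v)
    (hedge : ∀ u v, E u v → f u ≠ v → E (f u) v) :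
    IsRetrievalPlan E (M.image f) (fun v => f (if v ∈ M then v else par v)) := by
  intro v hv
  have hwM : (if v ∈ M then v else par v) ∈ M := by
    split_ifs with hvM
    exacts [hvM, (h v hvM).1]
  have hfw := mem_image_of_mem f hwM
  have hne : f (if v ∈ M then v else par v) ≠ v := fun heq => hv (heq ▸ hfw)
  refine ⟨hfw, ?_⟩
  by_cases hvM : v ∈ M
  · simp only [if_pos hvM] at hne ⊢
    exact hself v hne
  · simp only [if_neg hvM] at hne ⊢
    exact hedge _ _ (h v hvM).2 hne

theorem mul_card_add_card_sdiff_le [Fintype α] [DecidableEq α] {N : ℕ} (hN : 1 ≤ N) {s t : Finset α}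
    (hst : #s ≤ #t) : N * #s + #(univ \ s) ≤ N * #t + #(univ \ t) := by
  rw [card_univ_sdiff, card_univ_sdiff]
  have hs := card_le_univ s
  have ht := card_le_univ t
  obtain ⟨K, rfl⟩ := Nat.exists_eq_add_of_le hN
  have := Nat.mul_le_mul_left K hst
  simp only [add_mul, one_mul]
  omega

end Contraction

section SetCover

variable {m n : ℕ}

def toSetVersion (c : Fin n → Fin m) : Fin m ⊕ Fin n → Fin m ⊕ Fin n :=
  Sum.elim Sum.inl (Sum.inl ∘ c)

theorem toSetVersion_ne_inr (c : Fin n → Fin m) (v : Fin m ⊕ Fin n) (j : Fin n) :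
    toSetVersion c v ≠ Sum.inr j := by
  cases v <;> simp [toSetVersion]

variable {mem : Fin m → Fin n → Prop} {c : Fin n → Fin m}

theorem covEdge_toSetVersion_self (hc : ∀ j, mem (c j) j) {v : Fin m ⊕ Fin n}
    (hv : toSetVersion c v ≠ v) : covEdge mem (toSetVersion c v) v := by
  rcases v with i | j
  · exact absurd rfl hv
  · exact hc j

theorem covEdge_toSetVersion {u v : Fin m ⊕ Fin n} (huv : covEdge mem u v)
    (hne : toSetVersion c u ≠ v) : covEdge mem (toSetVersion c u) v := by
  rcases u with i | j <;> rcases v with i' | j'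
  · exact huv
  · exact huv
  · exact fun h => hne (congrArg Sum.inl h)
  · exact huv.elim

end SetCover

/-- Structure lemma for BMR with max-retrieval constraint `R = 1` on the set-cover
reduction graph (all materialization costs `N ≥ 1`, all edges of storage and
retrieval cost `1`): any feasible solution — a materialized set `M` together with,
for each non-materialized version, a stored delta from a materialized version —
can be transformed into a feasible solution of equal or smaller total storage cost
`N·|M| + #(non-materialized)` in which no element version is materialized. -/
theorem bmr_no_element_materialized (m n N : ℕ) (hN : 1 ≤ N)
    (mem : Fin m → Fin n → Prop) (hcov : ∀ j : Fin n, ∃ i : Fin m, mem i j)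
    (M : Finset (Sum (Fin m) (Fin n)))
    (par : Sum (Fin m) (Fin n) → Sum (Fin m) (Fin n))
    (hfeas : ∀ v ∉ M, par v ∈ M ∧ covEdge mem (par v) v) :
    ∃ (M' : Finset (Sum (Fin m) (Fin n)))
      (par' : Sum (Fin m) (Fin n) → Sum (Fin m) (Fin n)),
      (∀ v ∉ M', par' v ∈ M' ∧ covEdge mem (par' v) v) ∧
      (∀ j : Fin n, Sum.inr j ∉ M') ∧
      N * M'.card + (Finset.univ \ M').card ≤ N * M.card + (Finset.univ \ M).card := by
  choose c hc using hcov
  have hplan : IsRetrievalPlan (covEdge mem) M par := hfeas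
  refine ⟨M.image (toSetVersion c), _,
    hplan.image _ (fun _ => covEdge_toSetVersion_self hc) (fun _ _ => covEdge_toSetVersion),
    fun j hj => ?_, mul_card_add_card_sdiff_le hN card_image_le⟩
  obtain ⟨v, -, hv⟩ := mem_image.1 hj
  exact toSetVersion_ne_inr c v j hv
end

section
/- In the set-cover reduction graph under max-retrieval constraint R = 1, a feasible BMR solution in which no element version is materialized induces a valid set cover: the family {A_i : a_i materialized} covers all elements o_1,...,o_n, because each b_j must be retrieved via a single stored edge from a materialized a_i with o_j ∈ A_i. -/
theorem covEdge_inr_iff {m n : ℕ} (mem : Fin m → Fin n → Prop)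
    (v : Sum (Fin m) (Fin n)) (j : Fin n) :
    covEdge mem v (Sum.inr j) ↔ ∃ i, v = Sum.inl i ∧ mem i j := by
  cases v <;> simp [covEdge]

/-- In the set-cover reduction graph under max-retrieval constraint `R = 1`, a
feasible BMR solution (each non-materialized version retrieved via a single stored
delta from a materialized version) in which no element version is materialized
induces a valid set cover: each element `o_j` is covered by some materialized set
version `a_i` with `o_j ∈ A_i`. -/
theorem bmr_solution_induces_set_cover (m n : ℕ)
    (mem : Fin m → Fin n → Prop)
    (M : Finset (Sum (Fin m) (Fin n)))
    (par : Sum (Fin m) (Fin n) → Sum (Fin m) (Fin n))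
    (hfeas : ∀ v ∉ M, par v ∈ M ∧ covEdge mem (par v) v)
    (hnoelem : ∀ j : Fin n, Sum.inr j ∉ M) :
    ∀ j : Fin n, ∃ i : Fin m, Sum.inl i ∈ M ∧ mem i j := by
  intro j
  obtain ⟨hparM, hedge⟩ := hfeas (Sum.inr j) (hnoelem j)
  obtain ⟨i, hpar, hij⟩ := (covEdge_inr_iff mem _ j).mp hedge
  exact ⟨i, hpar ▸ hparM, hij⟩
end

section
/- Conversely, in the set-cover reduction graph, any set cover {A_i : i ∈ C} of size k yields a feasible BMR solution with max retrieval constraint R = 1 and total storage cost at most kN + m + n: materialize a_i for i ∈ C, store an edge of cost 1 from some materialized set version to each non-materialized set version, and store for each element b_j an edge (a_i, b_j) with i ∈ C covering o_j. Hence the optimal BMR storage cost is kN + O(m+n) where k is the minimum set cover size. -/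
/-- Conversely, any set cover `C` of size `k` yields a feasible BMR solution with
max-retrieval constraint `R = 1` (each non-materialized version one stored unit
edge away from a materialized version) whose materialized set is exactly
`{a_i : i ∈ C}` and whose total storage cost `N·|M| + #(stored edges)` is at most
`k·N + m + n`. -/
theorem set_cover_yields_bmr_solution (m n N : ℕ)
    (mem : Fin m → Fin n → Prop)
    (C : Finset (Fin m)) (hC : C.Nonempty)
    (hcover : ∀ j : Fin n, ∃ i ∈ C, mem i j) :
    ∃ (M : Finset (Sum (Fin m) (Fin n)))
      (par : Sum (Fin m) (Fin n) → Sum (Fin m) (Fin n)),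
      M = C.image Sum.inl ∧
      (∀ v ∉ M, par v ∈ M ∧ covEdge mem (par v) v) ∧
      N * M.card + (Finset.univ \ M).card ≤ C.card * N + m + n := by
  classical
  obtain ⟨c0, hc0⟩ := hC
  refine ⟨C.image Sum.inl, fun v =>
    match v with
    | Sum.inl _ => Sum.inl c0
    | Sum.inr j => Sum.inl (Classical.choose (hcover j)), rfl, ?_, ?_⟩
  · intro v hv
    match v with
    | Sum.inl i =>
      refine ⟨Finset.mem_image_of_mem _ hc0, ?_⟩
      intro h
      exact hv (Finset.mem_image_of_mem _ (by rw [← h]; exact hc0))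
    | Sum.inr j =>
      obtain ⟨hmem, hij⟩ := Classical.choose_spec (hcover j)
      exact ⟨Finset.mem_image_of_mem _ hmem, hij⟩
  · have h1 : (C.image (Sum.inl : Fin m → Sum (Fin m) (Fin n))).card = C.card :=
      Finset.card_image_of_injective C Sum.inl_injective
    have h2 : ((Finset.univ : Finset (Sum (Fin m) (Fin n))) \ C.image Sum.inl).card ≤ m + n := by
      calc ((Finset.univ : Finset (Sum (Fin m) (Fin n))) \ C.image Sum.inl).card
          ≤ (Finset.univ : Finset (Sum (Fin m) (Fin n))).card :=
            Finset.card_le_card (Finset.sdiff_subset)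
        _ = m + n := by simp
    rw [h1, Nat.mul_comm N C.card]
    omega
end

section
/- In the ILP formulation for MSR on the extended graph, the flow constraints (for every node u ≠ v_aux, the sum of x_e over incoming edges equals the sum of x_e over outgoing edges plus 1, with 0 ≤ x_e ≤ |V| and x_e ≤ (|V|-1)·I_e for binary I_e) imply that the support {e : x_e > 0} contains, for every node u, a path from v_aux to u, and Σ_e r_e·x_e equals the sum over all nodes of their path retrieval costs when the support is a spanning arborescence. -/
/-!
The nodes that cannot be reached from the root inside the support of `x` receive no flow from
the other nodes. Summing the conservation constraints over this set, its total inflow is the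
flow circulating inside it, which is at most its total outflow; as each of its nodes has demand
one, the set is empty.

On an arborescence the objective collapses to `∑ v, r (par v) v * dep v`. Expanding
`∑ v, Rv v * dep v` once through the recursion for `dep` and once through the recursion for `Rv`
produces the same term `∑ w, Rv (par w) * dep w`; cancelling it leaves the claimed identity,
without any appeal to acyclicity.
-/

open Finset Relation

theorem Relation.ReflTransGen.exists_seq {α : Type*} {r : α → α → Prop} {a b : α}
    (h : ReflTransGen r a b) :
    ∃ (k : ℕ) (p : ℕ → α), p 0 = a ∧ p k = b ∧ ∀ i < k, r (p i) (p (i + 1)) := by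
  induction h with
  | refl => exact ⟨0, fun _ => a, rfl, rfl, by omega⟩
  | @tail b c _ hbc ih =>
    obtain ⟨k, p, hp0, hpk, hp⟩ := ih
    refine ⟨k + 1, fun i => if i ≤ k then p i else c, by simp [hp0], by simp, fun i hi => ?_⟩
    rcases Nat.lt_succ_iff_lt_or_eq.mp hi with hik | rfl
    · simpa [hik.le, Nat.succ_le_of_lt hik] using hp i hik
    · simpa [hpk] using hbc

section UnitDemandFlow

variable {V : Type*} [Fintype V] (x : V → V → ℕ)

theorem eq_empty_of_unitDemand_of_no_inflow (S : Finset V)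
    (hdemand : ∀ u ∈ S, ∑ w, x w u = ∑ w, x u w + 1)
    (hclosed : ∀ u ∈ S, ∀ w ∉ S, x w u = 0) : S = ∅ := by
  have hin : ∑ u ∈ S, ∑ w, x w u = ∑ u ∈ S, ∑ w ∈ S, x w u :=
    sum_congr rfl fun u hu =>
      (sum_subset (subset_univ S) fun w _ hw => hclosed u hu w hw).symm
  have hout : ∑ u ∈ S, ∑ w ∈ S, x u w ≤ ∑ u ∈ S, ∑ w, x u w :=
    sum_le_sum fun u _ => sum_le_sum_of_subset (subset_univ S)
  have hbalance := sum_congr rfl hdemand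
  rw [sum_add_distrib, sum_const, smul_eq_mul, mul_one, hin, sum_comm] at hbalance
  exact card_eq_zero.mp (by omega)

theorem reflTransGen_support_of_unitDemand (root : V)
    (hdemand : ∀ u ≠ root, ∑ w, x w u = ∑ w, x u w + 1) (u : V) :
    ReflTransGen (fun a b => 0 < x a b) root u := by
  classical
  let S := univ.filter fun v => ¬ ReflTransGen (fun a b => 0 < x a b) root v
  have hSempty : S = ∅ := by
    refine eq_empty_of_unitDemand_of_no_inflow x S (fun v hv => hdemand v ?_) fun v hv w hw => ?_
    · rintro rfl
      exact (mem_filter.mp hv).2 .refl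
    · simp only [S, mem_filter, mem_univ, true_and, not_not] at hv hw
      by_contra hpos
      exact hv (hw.tail (Nat.pos_of_ne_zero hpos))
  by_contra hu
  have hmem : u ∈ S := mem_filter.mpr ⟨mem_univ u, hu⟩
  simp [hSempty] at hmem

end UnitDemandFlow

section Arborescence

variable {V R : Type*} [Fintype V] [DecidableEq V] [CommSemiring R]

theorem sum_mul_eq_sum_parent_mul (par : V → Option V) (r x : Option V → Option V → R)
    (size : V → R) (hx : ∀ w v, x w (some v) = if par v = w then size v else 0)
    (hroot : ∀ w, x w none = 0) :
    ∑ u, ∑ v, r u v * x u v = ∑ v, r (par v) (some v) * size v := by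
  rw [sum_comm, Fintype.sum_option]
  simp only [hroot, mul_zero, sum_const_zero, zero_add, hx, mul_ite, sum_ite_eq, mem_univ,
    if_true]

theorem sum_cost_mul_size_eq_sum_pathCost [IsCancelAdd R] (par : V → Option V)
    (size cost pathCost : V → R)
    (hsize : ∀ v, size v = 1 + ∑ w, if par w = some v then size w else 0)
    (hpath : ∀ v, pathCost v = (par v).elim 0 pathCost + cost v) :
    ∑ v, cost v * size v = ∑ v, pathCost v := by
  have hparent : ∑ v, ∑ w, (if par w = some v then pathCost v * size w else 0)
      = ∑ w, (par w).elim 0 pathCost * size w := by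
    rw [sum_comm]
    refine sum_congr rfl fun w _ => ?_
    cases par w <;> simp
  have hviaSize : ∑ v, pathCost v * size v
      = ∑ v, pathCost v + ∑ w, (par w).elim 0 pathCost * size w := by
    conv_lhs => rw [sum_congr rfl fun v _ => congrArg (pathCost v * ·) (hsize v)]
    simp only [mul_add, mul_one, mul_sum, mul_ite, mul_zero, sum_add_distrib, hparent]
  have hviaPath : ∑ v, pathCost v * size v
      = ∑ w, (par w).elim 0 pathCost * size w + ∑ v, cost v * size v := by
    conv_lhs => rw [sum_congr rfl fun v _ => congrArg (· * size v) (hpath v)]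
    simp only [add_mul, sum_add_distrib]
  rw [add_comm] at hviaPath
  exact add_right_cancel (hviaPath.symm.trans hviaSize)

end Arborescence

/-- ILP flow constraints for MSR on the extended graph with auxiliary root
`v_aux` (encoded as `none`): `x u v` counts how many versions are retrieved
through the edge `(u, v)`, and flow conservation demands, for every version `u`,
incoming flow = outgoing flow + 1.  Claims: (a) the support `{e : x_e > 0}`
contains, for every version `u`, a path from `v_aux` to `u`; (b) when the support
is a spanning arborescence given by the parent map `par` — with `x` on the edge
into `v` equal to the number `dep v` of descendants of `v` (including `v`), edge
retrieval costs `r` with auxiliary edges of retrieval cost `0`, and `Rv v` the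
retrieval cost of the path from `v_aux` to `v` — the ILP objective `∑ r_e · x_e`
equals the total retrieval cost `∑_v R(v)`. -/
theorem ilp_flow_support_and_objective (n : ℕ)
    (x r : Option (Fin n) → Option (Fin n) → ℕ)
    (hflow : ∀ u : Fin n,
      (∑ w : Option (Fin n), x w (some u)) = (∑ w : Option (Fin n), x (some u) w) + 1) :
    (∀ u : Fin n, ∃ (k : ℕ) (p : ℕ → Option (Fin n)),
      p 0 = none ∧ p k = some u ∧ ∀ i < k, 0 < x (p i) (p (i + 1))) ∧
    (∀ (par : Fin n → Option (Fin n)) (dep Rv : Fin n → ℕ),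
      (∀ v : Fin n, r none (some v) = 0) →
      (∀ v : Fin n, dep v = 1 + ∑ w : Fin n, if par w = some v then dep w else 0) →
      (∀ v : Fin n, par v = none → Rv v = 0) →
      (∀ v u : Fin n, par v = some u → Rv v = Rv u + r (some u) (some v)) →
      (∀ (w : Option (Fin n)) (v : Fin n), x w (some v) = if par v = w then dep v else 0) →
      (∀ w : Option (Fin n), x w none = 0) →
      (∑ u : Option (Fin n), ∑ v : Option (Fin n), r u v * x u v) = ∑ v : Fin n, Rv v) := by
  refine ⟨fun u => ?_, fun par dep Rv hr0 hdep hRv0 hRv hx hxn => ?_⟩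
  · refine (reflTransGen_support_of_unitDemand x none (fun v hv => ?_) (some u)).exists_seq
    obtain ⟨v, rfl⟩ := Option.ne_none_iff_exists'.mp hv
    exact hflow v
  · rw [sum_mul_eq_sum_parent_mul par r x dep hx hxn]
    refine sum_cost_mul_size_eq_sum_pathCost par dep (fun v => r (par v) (some v)) Rv hdep
      fun v => ?_
    cases hv : par v with
    | none => simp [hRv0 v hv, hr0]
    | some u => simp [hRv v u hv]
end
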